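/- arXiv:2502.05082 — 5 statements merged into one kernel-verified Lean document; each statement's English description precedes it below -/
import Mathlib

section
/- Let x ∈ ℝⁿ and let x' be the sequence obtained from x by swapping entries at positions i < j whenever x(i) > x(j) (i.e., sorting the pair {i,j} in ascending order). If (i,j) is an inversion of x (i.e., i < j and x(i) > x(j)), then the number of inversions of x' is at most the number of inversions of x minus 1. -/
/-- The number of inversions of a sequence `x : Fin n → ℝ`. -/
noncomputable def invCount {n : ℕ} (x : Fin n → ℝ) : ℕ :=
  (Finset.univ.filter (fun p : Fin n × Fin n => p.1 < p.2 ∧ x p.2 < x p.1)).card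

/-- Sorting the pair of positions `i < j` of `x` in ascending order. -/
noncomputable def sortPair {n : ℕ} (i j : Fin n) (x : Fin n → ℝ) : Fin n → ℝ :=
  fun t => if t = i then min (x i) (x j) else if t = j then max (x i) (x j) else x t

theorem sortPair_decreases_inversions {n : ℕ} (x : Fin n → ℝ) (i j : Fin n)
    (hij : i < j) (hinv : x j < x i) :
    invCount (sortPair i j x) ≤ invCount x - 1 ∧ 1 ≤ invCount x := by
  classical
  have hne : i ≠ j := hij.ne
  set x' := sortPair i j x with hx'def
  have hx'i : x' i = x j := by
    simp [hx'def, sortPair, min_eq_right hinv.le]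
  have hx'j : x' j = x i := by
    simp [hx'def, sortPair, hne.symm, max_eq_left hinv.le]
  have hx'o : ∀ t : Fin n, t ≠ i → t ≠ j → x' t = x t := by
    intro t h1 h2; simp [hx'def, sortPair, h1, h2]
  set S : Finset (Fin n × Fin n) :=
    Finset.univ.filter (fun p => p.1 < p.2 ∧ x p.2 < x p.1) with hS
  set S' : Finset (Fin n × Fin n) :=
    Finset.univ.filter (fun p => p.1 < p.2 ∧ x' p.2 < x' p.1) with hS'
  have hmemS : ∀ p : Fin n × Fin n, p ∈ S ↔ p.1 < p.2 ∧ x p.2 < x p.1 := by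
    intro p; simp [hS]
  have hmemS' : ∀ p : Fin n × Fin n, p ∈ S' ↔ p.1 < p.2 ∧ x' p.2 < x' p.1 := by
    intro p; simp [hS']
  have hij_mem : (i, j) ∈ S := (hmemS _).2 ⟨hij, hinv⟩
  have hpos : 1 ≤ S.card := Finset.card_pos.2 ⟨_, hij_mem⟩
  set f : Fin n × Fin n → Fin n × Fin n := fun p =>
    if p.2 = i then (if x i < x p.1 then p else (p.1, j))
    else if p.1 = j then (if x p.2 < x j then p else (i, p.2))
    else p with hf
  set g : Fin n × Fin n → Fin n × Fin n := fun p =>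
    if p ∈ S' then p
    else if p.2 = j then (p.1, i)
    else if p.1 = i then (j, p.2)
    else p with hg
  have hmaps : ∀ p ∈ S', f p ∈ S.erase (i, j) := by
    rintro ⟨a, b⟩ hp
    obtain ⟨hab, hxx⟩ := (hmemS' _).1 hp
    simp only at hab hxx
    by_cases hbi : b = i
    · have hai : a < i := hbi ▸ hab
      have haj : a < j := lt_trans hai hij
      have hxa : x j < x a := by
        rw [hbi, hx'i, hx'o a (ne_of_lt hai) (ne_of_lt haj)] at hxx
        exact hxx
      by_cases h1 : x i < x a
      · have hfp : f (a, b) = (a, i) := by simp [hf, hbi, h1]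
        rw [hfp, Finset.mem_erase]
        exact ⟨fun h => absurd (congrArg Prod.fst h) (ne_of_lt hai),
          (hmemS _).2 ⟨hai, h1⟩⟩
      · have hfp : f (a, b) = (a, j) := by simp [hf, hbi, h1]
        rw [hfp, Finset.mem_erase]
        exact ⟨fun h => absurd (congrArg Prod.fst h) (ne_of_lt hai),
          (hmemS _).2 ⟨haj, hxa⟩⟩
    · by_cases haj : a = j
      · have hjb : j < b := haj ▸ hab
        have hbj : b ≠ j := (ne_of_lt hjb).symm
        have hib : i < b := lt_trans hij hjb
        have hxb : x b < x i := by
          rw [haj, hx'j, hx'o b hbi hbj] at hxx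
          exact hxx
        by_cases h1 : x b < x j
        · have hfp : f (a, b) = (j, b) := by simp [hf, hbi, haj, h1]
          rw [hfp, Finset.mem_erase]
          exact ⟨fun h => absurd (congrArg Prod.fst h) hne.symm,
            (hmemS _).2 ⟨hjb, h1⟩⟩
        · have hfp : f (a, b) = (i, b) := by simp [hf, hbi, haj, h1]
          rw [hfp, Finset.mem_erase]
          exact ⟨fun h => absurd (congrArg Prod.snd h) hbj,
            (hmemS _).2 ⟨hib, hxb⟩⟩
      · have hfp : f (a, b) = (a, b) := by simp [hf, hbi, haj]
        rw [hfp, Finset.mem_erase]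
        by_cases hai : a = i
        · by_cases hbj : b = j
          · exfalso
            rw [hai, hbj, hx'i, hx'j] at hxx
            exact absurd hxx (not_lt.2 hinv.le)
          · have hxb : x b < x j := by
              rw [hai, hx'i, hx'o b hbi hbj] at hxx; exact hxx
            exact ⟨fun h => absurd (congrArg Prod.snd h) hbj,
              (hmemS _).2 ⟨hab, by show x b < x a; rw [hai]; exact lt_trans hxb hinv⟩⟩
        · by_cases hbj : b = j
          · have hxa : x i < x a := by
              rw [hbj, hx'j, hx'o a hai haj] at hxx; exact hxx
            exact ⟨fun h => absurd (congrArg Prod.fst h) hai,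
              (hmemS _).2 ⟨hab, by show x b < x a; rw [hbj]; exact lt_trans hinv hxa⟩⟩
          · have hxa : x b < x a := by
              rw [hx'o a hai haj, hx'o b hbi hbj] at hxx; exact hxx
            exact ⟨fun h => absurd (congrArg Prod.fst h) hai,
              (hmemS _).2 ⟨hab, hxa⟩⟩
  have hgf : ∀ p ∈ S', g (f p) = p := by
    rintro ⟨a, b⟩ hp
    obtain ⟨hab, hxx⟩ := (hmemS' _).1 hp
    simp only at hab hxx
    by_cases hbi : b = i
    · have hai : a < i := hbi ▸ hab
      have haj : a < j := lt_trans hai hij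
      have hane_i : a ≠ i := ne_of_lt hai
      have hane_j : a ≠ j := ne_of_lt haj
      have hxa : x j < x a := by
        rw [hbi, hx'i, hx'o a hane_i hane_j] at hxx
        exact hxx
      by_cases h1 : x i < x a
      · have hfp : f (a, b) = (a, i) := by simp [hf, hbi, h1]
        have hmem : (a, i) ∈ S' := (hmemS' _).2 ⟨hai, by rw [hx'i, hx'o a hane_i hane_j]; exact hxa⟩
        have hgv : g (a, i) = (a, i) := by simp [hg, hmem]
        rw [hfp, hgv, hbi]
      · have hfp : f (a, b) = (a, j) := by simp [hf, hbi, h1]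
        have hmem : (a, j) ∉ S' := by
          intro h
          obtain ⟨-, h2⟩ := (hmemS' _).1 h
          simp only at h2
          rw [hx'j, hx'o a hane_i hane_j] at h2
          exact h1 h2
        have hgv : g (a, j) = (a, i) := by simp [hg, hmem]
        rw [hfp, hgv, hbi]
    · by_cases haj : a = j
      · have hjb : j < b := haj ▸ hab
        have hbj : b ≠ j := (ne_of_lt hjb).symm
        have hxb : x b < x i := by
          rw [haj, hx'j, hx'o b hbi hbj] at hxx
          exact hxx
        by_cases h1 : x b < x j
        · have hfp : f (a, b) = (j, b) := by simp [hf, hbi, haj, h1]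
          have hmem : (j, b) ∈ S' := (hmemS' _).2 ⟨hjb, by rw [hx'j, hx'o b hbi hbj]; exact hxb⟩
          have hgv : g (j, b) = (j, b) := by simp [hg, hmem]
          rw [hfp, hgv, haj]
        · have hfp : f (a, b) = (i, b) := by simp [hf, hbi, haj, h1]
          have hmem : (i, b) ∉ S' := by
            intro h
            obtain ⟨-, h2⟩ := (hmemS' _).1 h
            simp only at h2
            rw [hx'i, hx'o b hbi hbj] at h2
            exact h1 h2
          have hgv : g (i, b) = (j, b) := by simp [hg, hmem, hbj]
          rw [hfp, hgv, haj]
      · have hfp : f (a, b) = (a, b) := by simp [hf, hbi, haj]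
        have hgv : g (a, b) = (a, b) := by simp [hg, hp]
        rw [hfp, hgv]
  have hinj : ∀ p ∈ S', ∀ q ∈ S', f p = f q → p = q := by
    intro p hp q hq h
    rw [← hgf p hp, ← hgf q hq, h]
  have hcard : S'.card ≤ (S.erase (i, j)).card :=
    Finset.card_le_card_of_injOn f hmaps hinj
  rw [Finset.card_erase_of_mem hij_mem] at hcard
  exact ⟨hcard, hpos⟩
end

section
/- Let E_m ~ Exp(m²) be independent for m ≥ 1 and T = ∑_{m≥1} E_m. Then for all n ≥ 1, P(T > 4·log n) ≤ e²/n². -/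
/-!
Chernoff bound at `θ = 1/2`: an `Exp(r)` variable has `E[exp(X/2)] = r/(r - 1/2) ≤ exp(1/r)` for
`r ≥ 1`, so by independence every partial sum `S_N = E_0 + ⋯ + E_{N-1}` has
`E[exp(S_N/2)] ≤ exp(∑ 1/(m+1)²) ≤ e²`, and Markov's inequality gives
`P(S_N ≥ a) ≤ exp(2 - a/2)`. If the series exceeds `a`, so do all late partial sums, and continuity
of the measure from below passes the bound to `T`; at `a = 4 log n` it reads `e²/n²`.
-/

open MeasureTheory ProbabilityTheory Real Set Filter Finset
open scoped ENNReal

lemma exponentialPDF_mul_exp {r t : ℝ} (hr : 0 < r) (ht : t < r) (x : ℝ) :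
    exponentialPDF r x * ENNReal.ofReal (rexp (t * x)) =
      ENNReal.ofReal (r / (r - t)) * exponentialPDF (r - t) x := by
  rcases lt_or_ge x 0 with hx | hx
  · simp [exponentialPDF_of_neg hx]
  · have hrt : r - t ≠ 0 := (sub_pos.2 ht).ne'
    rw [exponentialPDF_of_nonneg hx, exponentialPDF_of_nonneg hx,
      ← ENNReal.ofReal_mul (by positivity), ← ENNReal.ofReal_mul (div_pos hr (sub_pos.2 ht)).le]
    congr 1
    field_simp
    rw [← Real.exp_add]
    ring_nf

lemma lintegral_exp_mul_expMeasure {r t : ℝ} (hr : 0 < r) (ht : t < r) :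
    ∫⁻ x, ENNReal.ofReal (rexp (t * x)) ∂expMeasure r = ENNReal.ofReal (r / (r - t)) := by
  change ∫⁻ x, _ ∂volume.withDensity (exponentialPDF r) = _
  rw [lintegral_withDensity_eq_lintegral_mul _
    (by exact (measurable_exponentialPDFReal r).ennreal_ofReal) (by fun_prop)]
  simp_rw [Pi.mul_apply, exponentialPDF_mul_exp hr ht]
  rw [lintegral_const_mul _ (by exact (measurable_exponentialPDFReal _).ennreal_ofReal),
    lintegral_exponentialPDF_eq_one (sub_pos.2 ht), mul_one]

lemma integrable_exp_mul_expMeasure {r t : ℝ} (hr : 0 < r) (ht : t < r) :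
    Integrable (fun x ↦ rexp (t * x)) (expMeasure r) := by
  refine ⟨by fun_prop, ?_⟩
  simp only [HasFiniteIntegral, Real.enorm_eq_ofReal (exp_pos _).le,
    lintegral_exp_mul_expMeasure hr ht, ENNReal.ofReal_lt_top]

lemma mgf_id_expMeasure {r t : ℝ} (hr : 0 < r) (ht : t < r) :
    mgf id (expMeasure r) t = r / (r - t) := by
  rw [mgf, integral_eq_lintegral_of_nonneg_ae (ae_of_all _ fun x ↦ (exp_pos _).le) (by fun_prop)]
  simp only [id, lintegral_exp_mul_expMeasure hr ht]
  exact ENNReal.toReal_ofReal (div_pos hr (sub_pos.2 ht)).le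

lemma div_sub_half_le_exp_inv {r : ℝ} (hr : 1 ≤ r) : r / (r - 1 / 2) ≤ rexp r⁻¹ := by
  calc r / (r - 1 / 2) ≤ r⁻¹ + 1 := by
        rw [div_le_iff₀ (by linarith)]
        field_simp
        nlinarith
    _ ≤ rexp r⁻¹ := add_one_le_exp _

lemma sum_range_inv_succ_sq_le_two (N : ℕ) : ∑ m ∈ range N, (((m : ℝ) + 1) ^ 2)⁻¹ ≤ 2 := by
  have := sum_Ioo_inv_sq_le (α := ℝ) 0 (N + 1)
  rw [← Finset.Ico_add_one_left_eq_Ioo, Finset.sum_Ico_eq_sum_range] at this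
  simpa [add_comm] using this

lemma eventually_lt_sum_range_of_lt_tsum {f : ℕ → ℝ} {a : ℝ} (ha : 0 ≤ a)
    (h : a < ∑' m, f m) : ∀ᶠ N in atTop, a < ∑ i ∈ range N, f i := by
  -- a non-summable series has `tsum = 0 ≤ a`
  have hf : Summable f := by
    by_contra hf
    exact (tsum_eq_zero_of_not_summable hf ▸ h).not_ge ha
  exact hf.hasSum.tendsto_sum_nat.eventually (eventually_gt_nhds h)

section

variable {Ω : Type*} [MeasurableSpace Ω] {μ : Measure Ω}

lemma measure_lt_tsum_le_of_forall_sum_range {X : ℕ → Ω → ℝ} {a : ℝ} {c : ℝ≥0∞} (ha : 0 ≤ a)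
    (h : ∀ N, μ {ω | a < ∑ i ∈ range N, X i ω} ≤ c) : μ {ω | a < ∑' m, X m ω} ≤ c := by
  set B : ℕ → Set Ω := fun N ↦ ⋂ M ≥ N, {ω | a < ∑ i ∈ range M, X i ω}
  have hB : Monotone B := fun N N' hN ↦ biInter_mono (fun M hM ↦ hN.trans hM) fun _ _ ↦ subset_rfl
  calc μ {ω | a < ∑' m, X m ω} ≤ μ (⋃ N, B N) := measure_mono fun ω hω ↦ by
        obtain ⟨N, hN⟩ := eventually_atTop.1 (eventually_lt_sum_range_of_lt_tsum ha hω)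
        exact mem_iUnion.2 ⟨N, mem_iInter₂.2 hN⟩
    _ = ⨆ N, μ (B N) := hB.measure_iUnion
    _ ≤ c := iSup_le fun N ↦ (measure_mono (biInter_subset_of_mem le_rfl)).trans (h N)

lemma mgf_eq_of_map_eq_expMeasure {X : Ω → ℝ} {r t : ℝ} (hX : Measurable X)
    (hXr : μ.map X = expMeasure r) (hr : 0 < r) (ht : t < r) : mgf X μ t = r / (r - t) := by
  rw [← mgf_id_map hX.aemeasurable, hXr, mgf_id_expMeasure hr ht]

lemma integrable_exp_mul_of_map_eq_expMeasure {X : Ω → ℝ} {r t : ℝ} (hX : Measurable X)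
    (hXr : μ.map X = expMeasure r) (hr : 0 < r) (ht : t < r) :
    Integrable (fun ω ↦ rexp (t * X ω)) μ := by
  have h := integrable_exp_mul_expMeasure hr ht
  rw [← hXr] at h
  exact (integrable_map_measure (by fun_prop) hX.aemeasurable).1 h

variable {E : ℕ → Ω → ℝ}

lemma mgf_sum_range_half_le_exp_two (hmeas : ∀ m, Measurable (E m))
    (hdist : ∀ m : ℕ, μ.map (E m) = expMeasure (((m : ℝ) + 1) ^ 2)) (hindep : iIndepFun E μ)
    (N : ℕ) : mgf (∑ i ∈ range N, E i) μ (1 / 2) ≤ rexp 2 := by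
  rw [hindep.mgf_sum hmeas]
  calc ∏ i ∈ range N, mgf (E i) μ (1 / 2) ≤ ∏ i ∈ range N, rexp (((i : ℝ) + 1) ^ 2)⁻¹ := by
        refine prod_le_prod (fun i _ ↦ mgf_nonneg) fun i _ ↦ ?_
        have hi : 1 ≤ ((i : ℝ) + 1) ^ 2 := one_le_pow₀ (by simp)
        rw [mgf_eq_of_map_eq_expMeasure (hmeas i) (hdist i) (by positivity) (by linarith)]
        exact div_sub_half_le_exp_inv hi
    _ = rexp (∑ i ∈ range N, (((i : ℝ) + 1) ^ 2)⁻¹) := (exp_sum _ _).symm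
    _ ≤ rexp 2 := exp_le_exp.2 (sum_range_inv_succ_sq_le_two N)

lemma measureReal_le_sum_range_le (hmeas : ∀ m, Measurable (E m))
    (hdist : ∀ m : ℕ, μ.map (E m) = expMeasure (((m : ℝ) + 1) ^ 2)) (hindep : iIndepFun E μ)
    (a : ℝ) (N : ℕ) :
    μ.real {ω | a ≤ ∑ i ∈ range N, E i ω} ≤ rexp (2 - a / 2) := by
  have := hindep.isProbabilityMeasure
  have hint := hindep.integrable_exp_mul_sum (t := 1 / 2) hmeas (s := range N) fun i _ ↦
    integrable_exp_mul_of_map_eq_expMeasure (hmeas i) (hdist i) (by positivity)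
      (by nlinarith [(i.cast_nonneg : (0 : ℝ) ≤ i)])
  calc μ.real {ω | a ≤ ∑ i ∈ range N, E i ω}
      ≤ rexp (-(1 / 2) * a) * mgf (∑ i ∈ range N, E i) μ (1 / 2) := by
        simpa only [Finset.sum_apply] using measure_ge_le_exp_mul_mgf a (by norm_num) hint
    _ ≤ rexp (-(1 / 2) * a) * rexp 2 :=
        mul_le_mul_of_nonneg_left (mgf_sum_range_half_le_exp_two hmeas hdist hindep N)
          (exp_pos _).le
    _ = rexp (2 - a / 2) := by rw [← exp_add]; ring_nf

end

theorem tail_sum_exponentials_general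
    {Ω : Type*} [MeasurableSpace Ω] (μ : Measure Ω)
    (E : ℕ → Ω → ℝ) (hmeas : ∀ m, Measurable (E m))
    (hdist : ∀ m : ℕ, μ.map (E m) = expMeasure (((m : ℝ) + 1) ^ 2))
    (hindep : iIndepFun E μ)
    (n : ℕ) (hn : 1 ≤ n) :
    μ {ω | 4 * Real.log n < ∑' m : ℕ, E m ω} ≤
      ENNReal.ofReal (Real.exp 2 / n ^ 2) := by
  have hn' : (0 : ℝ) < n := by exact_mod_cast hn
  have hlog : 0 ≤ 4 * Real.log n := mul_nonneg (by norm_num) (log_nonneg (Nat.one_le_cast.2 hn))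
  have hexp : rexp (2 - 4 * Real.log n / 2) = rexp 2 / n ^ 2 := by
    rw [show 2 - 4 * Real.log n / 2 = 2 - 2 * Real.log n by ring, exp_sub, mul_comm, exp_mul,
      exp_log hn', rpow_two]
  refine measure_lt_tsum_le_of_forall_sum_range hlog fun N ↦ ?_
  have := hindep.isProbabilityMeasure
  calc μ {ω | 4 * Real.log n < ∑ i ∈ range N, E i ω}
      ≤ μ {ω | 4 * Real.log n ≤ ∑ i ∈ range N, E i ω} :=
        measure_mono (ofPred_subset_ofPred.2 fun _ h ↦ h.le)
    _ = ENNReal.ofReal (μ.real {ω | 4 * Real.log n ≤ ∑ i ∈ range N, E i ω}) :=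
        (ofReal_measureReal (measure_ne_top _ _)).symm
    _ ≤ ENNReal.ofReal (rexp 2 / n ^ 2) :=
        hexp ▸ ENNReal.ofReal_le_ofReal (measureReal_le_sum_range_le hmeas hdist hindep _ N)

theorem tail_sum_exponentials
    {Ω : Type*} [MeasurableSpace Ω] (μ : Measure Ω) [IsProbabilityMeasure μ]
    (E : ℕ → Ω → ℝ) (hmeas : ∀ m, Measurable (E m))
    (hdist : ∀ m : ℕ, μ.map (E m) = expMeasure (((m : ℝ) + 1) ^ 2))
    (hindep : iIndepFun E μ)
    (n : ℕ) (hn : 1 ≤ n) :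
    μ {ω | 4 * Real.log n < ∑' m : ℕ, E m ω} ≤
      ENNReal.ofReal (Real.exp 2 / n ^ 2) :=
  tail_sum_exponentials_general μ E hmeas hdist hindep n hn
end

section
/- The map that replaces the k largest entries of x ∈ ℝⁿ by 1 and the rest by 0 (with fixed tie-breaking) commutes with sorting a pair: if x' is obtained from x by sorting the entries at positions i < j, then x'_{(k)} is obtained from x_{(k)} by sorting positions i < j. -/
/-- The 0–1 projection of `x`: positions holding one of the `k` largest entries get `1`,
the rest get `0`. -/
noncomputable def zeroOneProj {n : ℕ} (k : ℕ) (x : Fin n → ℝ) : Fin n → ℝ :=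
  fun i => if (Finset.univ.filter (fun t => x i < x t)).card < k then 1 else 0

private lemma count_mono {n : ℕ} (x : Fin n → ℝ) {a b : Fin n} (hab : x a ≤ x b) :
    (Finset.univ.filter fun t => x b < x t).card ≤
      (Finset.univ.filter fun t => x a < x t).card := by
  apply Finset.card_le_card
  intro t ht
  simp only [Finset.mem_filter, Finset.mem_univ, true_and] at *
  exact lt_of_le_of_lt hab ht

private lemma proj_mono {n : ℕ} (k : ℕ) (x : Fin n → ℝ) {a b : Fin n} (hab : x a ≤ x b) :
    zeroOneProj k x a ≤ zeroOneProj k x b := by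
  have h := count_mono x hab
  unfold zeroOneProj
  split_ifs with h1 h2
  · exact le_refl _
  · exact absurd (lt_of_le_of_lt h h1) h2
  · norm_num
  · exact le_refl _

theorem zeroOneProj_comm_sortPair {n : ℕ} (x : Fin n → ℝ) (hx : Function.Injective x)
    (i j : Fin n) (hij : i < j) (k : ℕ) (hk : k ≤ n) :
    zeroOneProj k (sortPair i j x) = sortPair i j (zeroOneProj k x) := by
  have hne : i ≠ j := ne_of_lt hij
  rcases lt_or_gt_of_ne (fun h : x i = x j => hne (hx h)) with h | h
  · -- x i < x j : sorting does nothing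
    have hx' : sortPair i j x = x := by
      funext t
      simp only [sortPair]
      split_ifs with h1 h2
      · subst h1; exact min_eq_left h.le
      · subst h2; exact max_eq_right h.le
      · rfl
    rw [hx']
    have hz : zeroOneProj k x i ≤ zeroOneProj k x j := proj_mono k x h.le
    funext t
    simp only [sortPair]
    split_ifs with h1 h2
    · subst h1; exact (min_eq_left hz).symm
    · subst h2; exact (max_eq_right hz).symm
    · rfl
  · -- x j < x i : sorting swaps
    have hx' : sortPair i j x = x ∘ Equiv.swap i j := by
      funext t
      simp only [sortPair, Function.comp]
      split_ifs with h1 h2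
      · subst h1; rw [Equiv.swap_apply_left]; exact min_eq_right h.le
      · subst h2; rw [Equiv.swap_apply_right]; exact max_eq_left h.le
      · rw [Equiv.swap_apply_of_ne_of_ne h1 h2]
    have hproj : zeroOneProj k (x ∘ Equiv.swap i j) =
        (zeroOneProj k x) ∘ (Equiv.swap i j) := by
      funext a
      simp only [zeroOneProj, Function.comp]
      have hcard : (Finset.univ.filter fun t =>
            x (Equiv.swap i j a) < x (Equiv.swap i j t)).card
          = (Finset.univ.filter fun t => x (Equiv.swap i j a) < x t).card := by
        apply Finset.card_bij (fun t _ => Equiv.swap i j t)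
        · intro t ht
          simp only [Finset.mem_filter, Finset.mem_univ, true_and] at *
          exact ht
        · intro t₁ _ t₂ _ hh
          exact (Equiv.swap i j).injective hh
        · intro b hb
          refine ⟨Equiv.swap i j b, ?_, by simp⟩
          simp only [Finset.mem_filter, Finset.mem_univ, true_and,
            Equiv.swap_apply_self] at *
          exact hb
      simp only [hcard]
    rw [hx', hproj]
    have hz : zeroOneProj k x j ≤ zeroOneProj k x i := proj_mono k x h.le
    funext t
    simp only [sortPair, Function.comp]
    split_ifs with h1 h2
    · subst h1; rw [Equiv.swap_apply_left]; exact (min_eq_right hz).symm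
    · subst h2; rw [Equiv.swap_apply_right]; exact (max_eq_left hz).symm
    · rw [Equiv.swap_apply_of_ne_of_ne h1 h2]
end

section
/- Let n = 2^N and let D be sampled by first choosing K uniformly from {1,...,N} and then D uniformly from the integer interval (n/2^{K+1}, n/2^K]. Then for every integer d with 1 ≤ d ≤ n/2, P(D = d) ≥ 1/(d·N). Consequently, the matching distribution of the structured parallel sorter chooses any fixed pair {i,j} at distance d with probability at least 1/(4·d·lg n). -/
theorem structured_parallel_distance_prob (N : ℕ) (hN : 1 ≤ N) (n : ℕ) (hn : n = 2 ^ N)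
    (pD : ℕ → ℝ)
    (hpD : ∀ d : ℕ, pD d =
      ∑ k ∈ Finset.Icc 1 N, (1 / (N : ℝ)) *
        (if d ∈ Finset.Ioc (n / 2 ^ (k + 1)) (n / 2 ^ k) then
          1 / ((Finset.Ioc (n / 2 ^ (k + 1)) (n / 2 ^ k)).card : ℝ) else 0)) :
    ∀ d : ℕ, 1 ≤ d → d ≤ n / 2 →
      1 / ((d : ℝ) * N) ≤ pD d ∧ 1 / (4 * (d : ℝ) * N) ≤ pD d / 4 := by
  intro d hd1 hd2
  have h2 : (1:ℕ) < 2 := one_lt_two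
  set m := Nat.clog 2 d with hm
  have hdle : d ≤ 2 ^ m := Nat.le_pow_clog h2 d
  have hn2 : n / 2 = 2 ^ (N - 1) := by
    rw [hn]
    have : 2 ^ N = 2 ^ (N - 1) * 2 := by
      rw [← pow_succ]; congr 1; omega
    omega
  have hmN : m ≤ N - 1 := by
    have hdle' : d ≤ 2 ^ (N - 1) := by rwa [hn2] at hd2
    calc m ≤ Nat.clog 2 (2 ^ (N - 1)) := Nat.clog_mono_right 2 hdle'
      _ = N - 1 := Nat.clog_pow 2 _ h2
  set k := N - m with hk
  have hk1 : 1 ≤ k := by omega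
  have hkN : k ≤ N := Nat.sub_le _ _
  have hup : n / 2 ^ k = 2 ^ m := by
    rw [hn, Nat.pow_div hkN two_pos]
    congr 1; omega
  have hlow : n / 2 ^ (k + 1) = 2 ^ m / 2 := by
    rw [pow_succ, ← Nat.div_div_eq_div_mul, hup]
  have hlt : n / 2 ^ (k + 1) < d := by
    rw [hlow]
    rcases Nat.lt_or_ge d 2 with h | h
    · have hd1' : d = 1 := by omega
      have : m = 0 := by rw [hm, hd1', Nat.clog_one_right]
      simp [this, hd1']
    · have hm1 : 1 ≤ m := Nat.clog_pos h2 h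
      have hpl : 2 ^ (m - 1) < d := Nat.pow_pred_clog_lt_self h2 h
      have he : 2 ^ m = 2 ^ (m - 1) * 2 := by
        rw [← pow_succ]; congr 1; omega
      omega
  have hmemIoc : d ∈ Finset.Ioc (n / 2 ^ (k + 1)) (n / 2 ^ k) :=
    Finset.mem_Ioc.mpr ⟨hlt, by rw [hup]; exact hdle⟩
  set c := (Finset.Ioc (n / 2 ^ (k + 1)) (n / 2 ^ k)).card with hc
  have hcval : c = 2 ^ m - 2 ^ m / 2 := by
    rw [hc, Nat.card_Ioc, hup, hlow]
  have hc1 : 1 ≤ c := Finset.card_pos.mpr ⟨d, hmemIoc⟩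
  have hcd : c ≤ d := by
    rw [hlow] at hlt
    have : 2 ^ m - 2 ^ m / 2 ≤ 2 ^ m / 2 + 1 := by omega
    omega
  -- nonnegativity of each summand
  have hnn : ∀ j ∈ Finset.Icc 1 N, (0:ℝ) ≤ (1 / (N : ℝ)) *
      (if d ∈ Finset.Ioc (n / 2 ^ (j + 1)) (n / 2 ^ j) then
        1 / ((Finset.Ioc (n / 2 ^ (j + 1)) (n / 2 ^ j)).card : ℝ) else 0) := by
    intro j _
    apply mul_nonneg (by positivity)
    split <;> positivity
  have hmem : k ∈ Finset.Icc 1 N := Finset.mem_Icc.mpr ⟨hk1, hkN⟩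
  have hsingle : (1 / (N : ℝ)) *
      (if d ∈ Finset.Ioc (n / 2 ^ (k + 1)) (n / 2 ^ k) then
        1 / ((Finset.Ioc (n / 2 ^ (k + 1)) (n / 2 ^ k)).card : ℝ) else 0) ≤ pD d := by
    rw [hpD]
    exact Finset.single_le_sum hnn hmem
  rw [if_pos hmemIoc] at hsingle
  have hNpos : (0:ℝ) < N := by exact_mod_cast hN
  have hcpos : (0:ℝ) < c := by exact_mod_cast hc1
  have hdpos : (0:ℝ) < d := by exact_mod_cast hd1
  have hcdR : (c:ℝ) ≤ d := by exact_mod_cast hcd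
  have key : 1 / ((d : ℝ) * N) ≤ pD d := by
    refine le_trans ?_ hsingle
    rw [div_mul_div_comm, one_mul]
    apply one_div_le_one_div_of_le (by positivity)
    calc (N:ℝ) * c ≤ N * d := by nlinarith
      _ = d * N := by ring
  refine ⟨key, ?_⟩
  have : 1 / (4 * (d : ℝ) * N) = (1 / ((d : ℝ) * N)) / 4 := by ring
  rw [this]
  linarith
end

section
/- Starting from the permutation x = (2,1,4,3,6,5,...,n,n-1) of {1,...,n} (n even), a comparison of positions (i,j) with i < j changes the state only if (i,j) = (2k-1, 2k) for some k, and the permutation becomes sorted exactly when every such adjacent pair (2k-1,2k), k ∈ {1,...,n/2}, has been compared at least once. -/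
/-- Sorting the pair of positions `i, j` (with `i < j`) of a natural-valued sequence. -/
def sortPairN {n : ℕ} (i j : Fin n) (x : Fin n → ℕ) : Fin n → ℕ :=
  fun t => if t = i then min (x i) (x j) else if t = j then max (x i) (x j) else x t

/-- The alternating initial permutation (0-indexed): positions `2k, 2k+1` hold
values `2k+1, 2k`. -/
def altPerm (m : ℕ) : Fin (2 * m) → ℕ :=
  fun i => if i.val % 2 = 0 then i.val + 1 else i.val - 1

/-- The state after the adjacent pairs indexed by `S` (pair `k` being positions
`2k, 2k+1`) have been sorted. -/
def altState (m : ℕ) (S : Finset ℕ) : Fin (2 * m) → ℕ :=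
  fun i => if i.val / 2 ∈ S then i.val else altPerm m i

theorem alternating_lower_bound (m : ℕ) (hm : 1 ≤ m) (S : Finset ℕ) :
    (∀ i j : Fin (2 * m), i < j →
      (¬ (j.val = i.val + 1 ∧ i.val % 2 = 0) →
          sortPairN i j (altState m S) = altState m S) ∧
      ((j.val = i.val + 1 ∧ i.val % 2 = 0) →
          sortPairN i j (altState m S) = altState m (insert (i.val / 2) S))) ∧
    (Monotone (altState m S) ↔ ∀ k : ℕ, k < m → k ∈ S) := by
  constructor
  · intro i j hij
    have hij' : i.val < j.val := hij
    constructor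
    · intro hne
      have hle : altState m S i ≤ altState m S j := by
        simp only [altState, altPerm]
        split_ifs <;> omega
      funext t
      simp only [sortPairN]
      rcases eq_or_ne t i with rfl | hti
      · simp [min_eq_left hle]
      · rcases eq_or_ne t j with rfl | htj
        · simp [hti, max_eq_right hle]
        · simp [hti, htj]
    · rintro ⟨hji, hie⟩
      funext t
      simp only [sortPairN, altState, altPerm, Finset.mem_insert]
      have hdvi : j.val / 2 = i.val / 2 := by omega
      rcases eq_or_ne t i with rfl | hti
      · by_cases hS : t.val / 2 ∈ S <;> simp [hS, hdvi] <;> first | exact hij.le | (split_ifs <;> omega)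
      · rcases eq_or_ne t j with rfl | htj
        · have : t ≠ i := hti
          by_cases hS : i.val / 2 ∈ S <;> simp [hS, hti, hdvi] <;> first | exact hij.le | (split_ifs <;> omega)
        · have ht' : t.val / 2 ≠ i.val / 2 := by
            intro h
            have hti' : t.val ≠ i.val := fun h => hti (Fin.ext h)
            have htj' : t.val ≠ j.val := fun h => htj (Fin.ext h)
            omega
          simp [hti, htj, ht']
  · constructor
    · intro hmono k hk
      by_contra hks
      have h1 : (⟨2 * k, by omega⟩ : Fin (2 * m)) ≤ ⟨2 * k + 1, by omega⟩ := by
        simp [Fin.le_def]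
      have h2 := hmono h1
      have e1 : 2 * k / 2 = k := by omega
      have e2 : (2 * k + 1) / 2 = k := by omega
      simp only [altState, altPerm, Fin.val_mk, e1, e2, if_neg hks] at h2
      split_ifs at h2 <;> omega
    · intro hS a b hab
      have ha : a.val / 2 ∈ S := hS _ (by omega)
      have hb : b.val / 2 ∈ S := hS _ (by omega)
      simp only [altState, ha, hb, if_true]
      exact hab
end
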